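/- arXiv:2208.06560 — 5 statements merged into one kernel-verified Lean document; each statement's English description precedes it below -/
import Mathlib

section
/- Let λ : ℝ → ℝ be a continuous concave function with λ(0) > 0, and suppose there exist β₁ > 0 and β₂ > 0 such that λ(μ) ≤ -β₁ μ² + β₂ for all μ ∈ ℝ. Then for every c ∈ ℝ, the equation λ(μ) = c μ has exactly two real roots, one of which is negative and the other positive. -/
/-- If `lam` is concave with `lam 0 > 0` and `r = t * s` with `0 < t < 1`,
then `r` and `s` cannot both be roots of `lam μ = c * μ`. -/
lemma aux_no_two_roots (lam : ℝ → ℝ) (hconc : ConcaveOn ℝ Set.univ lam)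
    (hpos : 0 < lam 0) (c t r s : ℝ) (ht0 : 0 < t) (ht1 : t < 1)
    (hr : r = t * s) (hrr : lam r = c * r) (hss : lam s = c * s) : False := by
  have h := hconc.2 (Set.mem_univ s) (Set.mem_univ (0 : ℝ)) ht0.le
    (by linarith : (0:ℝ) ≤ 1 - t) (by ring)
  simp only [smul_eq_mul, mul_zero, add_zero] at h
  rw [← hr] at h
  rw [hrr, hss, hr] at h
  nlinarith

theorem stmt_0 (lam : ℝ → ℝ) (hcont : Continuous lam)
    (hconc : ConcaveOn ℝ Set.univ lam) (hpos : 0 < lam 0)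
    (β₁ β₂ : ℝ) (hβ₁ : 0 < β₁) (hβ₂ : 0 < β₂)
    (hbound : ∀ μ : ℝ, lam μ ≤ -β₁ * μ^2 + β₂) :
    ∀ c : ℝ, ∃ μ₁ μ₂ : ℝ, μ₁ < 0 ∧ 0 < μ₂ ∧
      lam μ₁ = c * μ₁ ∧ lam μ₂ = c * μ₂ ∧
      ∀ μ : ℝ, lam μ = c * μ → μ = μ₁ ∨ μ = μ₂ := by
  intro c
  set g : ℝ → ℝ := fun μ => lam μ - c * μ with hg
  have hgc : Continuous g := hcont.sub (continuous_const.mul continuous_id)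
  set R : ℝ := max 1 ((β₂ + |c| + 1) / β₁) with hR
  have hR1 : (1:ℝ) ≤ R := le_max_left _ _
  have hR0 : (0:ℝ) < R := lt_of_lt_of_le one_pos hR1
  have hR2 : β₂ + |c| + 1 ≤ β₁ * R := by
    have := le_max_right 1 ((β₂ + |c| + 1) / β₁)
    rw [div_le_iff₀ hβ₁] at this
    linarith [this.trans_eq (mul_comm _ _)]
  have habs1 : -|c| ≤ c := neg_abs_le c
  have habs2 : c ≤ |c| := le_abs_self c
  have hgR : g R < 0 := by
    have hb := hbound R
    have : β₁ * R * R ≥ (β₂ + |c| + 1) * R := by nlinarith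
    simp only [hg]
    nlinarith
  have hgmR : g (-R) < 0 := by
    have hb := hbound (-R)
    have : β₁ * R * R ≥ (β₂ + |c| + 1) * R := by nlinarith
    simp only [hg]
    nlinarith
  have hg0 : 0 < g 0 := by simp [hg, hpos]
  -- positive root
  obtain ⟨μ₂, hμ₂mem, hμ₂⟩ : ∃ x ∈ Set.Icc (0:ℝ) R, g x = 0 := by
    have := intermediate_value_Icc' hR0.le hgc.continuousOn
      (Set.mem_Icc.mpr ⟨hgR.le, hg0.le⟩)
    obtain ⟨x, hx, hx'⟩ := this
    exact ⟨x, hx, hx'⟩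
  -- negative root
  obtain ⟨μ₁, hμ₁mem, hμ₁⟩ : ∃ x ∈ Set.Icc (-R) (0:ℝ), g x = 0 := by
    have := intermediate_value_Icc (by linarith : -R ≤ (0:ℝ)) hgc.continuousOn
      (Set.mem_Icc.mpr ⟨hgmR.le, hg0.le⟩)
    obtain ⟨x, hx, hx'⟩ := this
    exact ⟨x, hx, hx'⟩
  have hμ₂ne : μ₂ ≠ 0 := by rintro rfl; rw [hμ₂] at hg0; exact lt_irrefl _ hg0
  have hμ₁ne : μ₁ ≠ 0 := by rintro rfl; rw [hμ₁] at hg0; exact lt_irrefl _ hg0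
  have hμ₂pos : 0 < μ₂ := lt_of_le_of_ne hμ₂mem.1 (Ne.symm hμ₂ne)
  have hμ₁neg : μ₁ < 0 := lt_of_le_of_ne hμ₁mem.2 hμ₁ne
  have hroot₂ : lam μ₂ = c * μ₂ := by have := hμ₂; simp only [hg] at this; linarith
  have hroot₁ : lam μ₁ = c * μ₁ := by have := hμ₁; simp only [hg] at this; linarith
  refine ⟨μ₁, μ₂, hμ₁neg, hμ₂pos, hroot₁, hroot₂, ?_⟩
  intro μ hμ
  rcases lt_trichotomy μ 0 with hlt | heq | hgt
  · -- μ negative: show μ = μ₁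
    left
    by_contra hne
    rcases lt_or_gt_of_ne hne with h | h
    · exact aux_no_two_roots lam hconc hpos c (μ₁ / μ) μ₁ μ
        (div_pos_iff.mpr (Or.inr ⟨hμ₁neg, hlt⟩))
        (by rw [div_lt_iff_of_neg hlt]; linarith)
        ((div_mul_cancel₀ μ₁ hlt.ne).symm) hroot₁ hμ
    · exact aux_no_two_roots lam hconc hpos c (μ / μ₁) μ μ₁
        (div_pos_iff.mpr (Or.inr ⟨hlt, hμ₁neg⟩))
        (by rw [div_lt_iff_of_neg hμ₁neg]; linarith)
        ((div_mul_cancel₀ μ hμ₁neg.ne).symm) hμ hroot₁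
  · exfalso
    rw [heq] at hμ
    simp [hμ] at hpos
  · -- μ positive: show μ = μ₂
    right
    by_contra hne
    rcases lt_or_gt_of_ne hne with h | h
    · exact aux_no_two_roots lam hconc hpos c (μ / μ₂) μ μ₂
        (div_pos hgt hμ₂pos) ((div_lt_one hμ₂pos).mpr h)
        ((div_mul_cancel₀ μ hμ₂pos.ne').symm) hμ hroot₂
    · exact aux_no_two_roots lam hconc hpos c (μ₂ / μ) μ₂ μ
        (div_pos hμ₂pos hgt) ((div_lt_one hgt).mpr h)
        ((div_mul_cancel₀ μ₂ hgt.ne').symm) hroot₂ hμ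
end

section
/- Let λ : ℝ → ℝ be continuous and concave with λ(0) > 0 and λ(μ) → -∞ as |μ| → ∞. For each c ∈ ℝ, let μ̲(c) denote the unique negative root of λ(μ) = c μ. Then the function c ↦ μ̲(c) is strictly decreasing on ℝ. -/
open Filter

theorem stmt_1 (lam : ℝ → ℝ) (hcont : Continuous lam)
    (hconc : ConcaveOn ℝ Set.univ lam) (hpos : 0 < lam 0)
    (htop : Tendsto lam atTop atBot) (hbot : Tendsto lam atBot atBot)
    (μneg : ℝ → ℝ)
    (hroot : ∀ c : ℝ, μneg c < 0 ∧ lam (μneg c) = c * μneg c)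
    (huniq : ∀ c μ : ℝ, μ < 0 → lam μ = c * μ → μ = μneg c) :
    StrictAnti μneg := by
  intro c₁ c₂ hc
  obtain ⟨h1neg, h1eq⟩ := hroot c₁
  obtain ⟨h2neg, h2eq⟩ := hroot c₂
  by_contra hle
  push_neg at hle
  rcases eq_or_lt_of_le hle with heq | hlt
  · -- μneg c₁ = μneg c₂
    have : c₁ * μneg c₁ = c₂ * μneg c₁ := by rw [← h1eq, heq, h2eq, ← heq]
    have : c₁ = c₂ := mul_right_cancel₀ (ne_of_lt h1neg) this
    exact absurd this (ne_of_lt hc)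
  · -- μneg c₁ < μneg c₂ < 0
    set h : ℝ → ℝ := fun μ => lam μ - c₁ * μ with hh
    have hcth : Continuous h := hcont.sub (continuous_const.mul continuous_id)
    have hneg2 : h (μneg c₂) < 0 := by
      have : c₂ * μneg c₂ < c₁ * μneg c₂ :=
        (mul_lt_mul_right_of_neg h2neg).mpr hc
      simp only [hh]
      linarith [h2eq]
    have hpos0 : 0 < h 0 := by simp [hh, hpos]
    have := intermediate_value_Ioo (le_of_lt h2neg) hcth.continuousOn
      (Set.mem_Ioo.mpr ⟨hneg2, hpos0⟩)
    obtain ⟨x, hx, hxe⟩ := this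
    have hx0 : x < 0 := hx.2
    have hxr : lam x = c₁ * x := by
      have : lam x - c₁ * x = 0 := hxe
      linarith
    have := huniq c₁ x hx0 hxr
    linarith [hx.1]
end

section
/- Let λ : ℝ → ℝ be continuous and concave with λ(0) > 0 and λ(μ) → -∞ as |μ| → ∞. For each c ∈ ℝ, let μ̄(c) denote the unique positive root of λ(μ) = c μ. Then the function c ↦ μ̄(c) is strictly decreasing on ℝ. -/
open Filter

theorem stmt_2 (lam : ℝ → ℝ) (hcont : Continuous lam)
    (hconc : ConcaveOn ℝ Set.univ lam) (hpos : 0 < lam 0)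
    (htop : Tendsto lam atTop atBot) (hbot : Tendsto lam atBot atBot)
    (μpos : ℝ → ℝ)
    (hroot : ∀ c : ℝ, 0 < μpos c ∧ lam (μpos c) = c * μpos c)
    (huniq : ∀ c μ : ℝ, 0 < μ → lam μ = c * μ → μ = μpos c) :
    StrictAnti μpos := by
  intro c1 c2 hc
  obtain ⟨h1pos, h1root⟩ := hroot c1
  obtain ⟨h2pos, h2root⟩ := hroot c2
  by_contra hle
  push_neg at hle
  rcases eq_or_lt_of_le hle with heq | hlt
  · have h : c1 * μpos c1 = c2 * μpos c1 := by
      rw [← h1root, heq, h2root, ← heq]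
    have := mul_right_cancel₀ (ne_of_gt h1pos) h
    exact absurd this (ne_of_lt hc)
  · set μ1 := μpos c1 with hμ1
    set μ2 := μpos c2 with hμ2
    have h2ne : μ2 ≠ 0 := ne_of_gt h2pos
    have hs0 : 0 < μ1 / μ2 := div_pos h1pos h2pos
    have hs1 : μ1 / μ2 < 1 := (div_lt_one h2pos).mpr hlt
    have key := hconc.2 (Set.mem_univ 0) (Set.mem_univ μ2)
      (le_of_lt (by linarith : (0:ℝ) < 1 - μ1 / μ2)) (le_of_lt hs0)
      (by ring)
    have hmul : μ1 / μ2 * μ2 = μ1 := div_mul_cancel₀ _ h2ne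
    simp only [smul_eq_mul, mul_zero, zero_add] at key
    rw [hmul] at key
    rw [h1root, h2root] at key
    have hrw : μ1 / μ2 * (c2 * μ2) = c2 * μ1 := by
      rw [mul_comm c2 μ2, ← mul_assoc, hmul]; ring
    rw [hrw] at key
    nlinarith [mul_pos (sub_pos.mpr hs1) hpos, mul_pos h1pos (sub_pos.mpr hc)]
end

section
/- Let g : ℝ → ℝ be C¹ with g(0) = 0 and g(u) ≤ -(λ/2) u for all u ∈ [0, δ], for some λ > 0 and δ > 0. If v is a C² bounded function on ℝ with 0 ≤ v ≤ δ and v'' + g(v) = 0, then v ≡ 0. -/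
open Set

theorem stmt_9 (g : ℝ → ℝ) (hg : ContDiff ℝ 1 g) (hg0 : g 0 = 0)
    (lam δ : ℝ) (hlam : 0 < lam) (hδ : 0 < δ)
    (hgdecay : ∀ u ∈ Icc (0:ℝ) δ, g u ≤ -(lam/2) * u)
    (v : ℝ → ℝ) (hv : ContDiff ℝ 2 v)
    (hvbounds : ∀ x : ℝ, v x ∈ Icc (0:ℝ) δ)
    (hODE : ∀ x : ℝ, deriv (deriv v) x + g (v x) = 0) :
    ∀ x : ℝ, v x = 0 := by
  have hv2 := (contDiff_succ_iff_deriv.mp (show ContDiff ℝ (1+1) v from hv))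
  have hdv : Differentiable ℝ v := hv2.1
  have hddv : Differentiable ℝ (deriv v) := hv2.2.2.differentiable one_ne_zero
  -- v'' ≥ 0
  have hconc : ∀ x, 0 ≤ deriv (deriv v) x := by
    intro x
    have h1 := hODE x
    have h2 := hgdecay (v x) (hvbounds x)
    have h3 : 0 ≤ v x := (hvbounds x).1
    nlinarith
  have hmono : Monotone (deriv v) := by
    apply monotone_of_deriv_nonneg hddv hconc
  -- deriv v ≡ 0
  have hderiv0 : ∀ x, deriv v x = 0 := by
    intro x0
    by_contra hne
    rcases lt_or_gt_of_ne hne with hneg | hpos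
    · -- deriv v x0 = c < 0 : v blows up to the left
      set c := deriv v x0 with hc
      set x := x0 + (δ + 1) / c with hx
      have hxlt : x ≤ x0 := by
        have : (δ + 1) / c < 0 := div_neg_of_pos_of_neg (by linarith) hneg
        simp [hx]; linarith
      -- w y = v y - c * y is antitone on Iic x0
      have hw : ∀ y ∈ Iic x0, deriv (fun y => v y - c * y) y ≤ 0 := by
        intro y hy
        have hcy : deriv (fun y => c * y) y = c := by
          simpa using ((hasDerivAt_id y).const_mul c).deriv
        rw [deriv_fun_sub (hdv y) (differentiableAt_fun_id.const_mul c), hcy]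
        have := hmono (show y ≤ x0 from hy)
        linarith
      have hanti : AntitoneOn (fun y => v y - c * y) (Iic x0) := by
        apply antitoneOn_of_deriv_nonpos (convex_Iic x0)
          (Continuous.continuousOn (by fun_prop)) (fun y hy =>
            ((hdv y).sub (differentiableAt_fun_id.const_mul c)).differentiableWithinAt) ?_
        intro y hy
        exact hw y (interior_subset hy)
      have := hanti (show x ∈ Iic x0 from hxlt) (mem_Iic.mpr le_rfl) hxlt
      simp only at this
      -- v x - c x ≥ v x0 - c x0, i.e. v x ≥ v x0 + c (x - x0) = v x0 + δ + 1
      have hcx : c * (x - x0) = δ + 1 := by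
        rw [hx]; field_simp
        ring
      have h1 : v x0 + (δ + 1) ≤ v x := by nlinarith
      have := (hvbounds x).2
      have := (hvbounds x0).1
      linarith
    · -- deriv v x0 = c > 0 : v blows up to the right
      set c := deriv v x0 with hc
      set x := x0 + (δ + 1) / c with hx
      have hxgt : x0 ≤ x := by
        have : 0 < (δ + 1) / c := div_pos (by linarith) hpos
        simp [hx]; linarith
      have hw : ∀ y ∈ Ici x0, 0 ≤ deriv (fun y => v y - c * y) y := by
        intro y hy
        have hcy : deriv (fun y => c * y) y = c := by
          simpa using ((hasDerivAt_id y).const_mul c).deriv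
        rw [deriv_fun_sub (hdv y) (differentiableAt_fun_id.const_mul c), hcy]
        have := hmono (show x0 ≤ y from hy)
        linarith
      have hmon : MonotoneOn (fun y => v y - c * y) (Ici x0) := by
        apply monotoneOn_of_deriv_nonneg (convex_Ici x0)
          (Continuous.continuousOn (by fun_prop)) (fun y hy =>
            ((hdv y).sub (differentiableAt_fun_id.const_mul c)).differentiableWithinAt) ?_
        intro y hy
        exact hw y (interior_subset hy)
      have := hmon (mem_Ici.mpr le_rfl) (show x ∈ Ici x0 from hxgt) hxgt
      simp only at this
      have hcx : c * (x - x0) = δ + 1 := by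
        rw [hx]; field_simp
        ring
      have h1 : v x0 + (δ + 1) ≤ v x := by nlinarith
      have := (hvbounds x).2
      have := (hvbounds x0).1
      linarith
  -- v is constant
  have hconst : ∀ x, v x = v 0 := fun x =>
    is_const_of_deriv_eq_zero hdv hderiv0 x 0
  -- g (v x) = 0
  have hg0v : ∀ x, g (v x) = 0 := by
    intro x
    have h1 := hODE x
    have h2 : deriv (deriv v) x = 0 := by
      have : deriv v = fun _ => (0:ℝ) := funext hderiv0
      rw [this, deriv_const]
    linarith
  intro x
  have h2 := hgdecay (v x) (hvbounds x)
  have h3 := (hvbounds x).1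
  have := hg0v x
  nlinarith
end

section
/- Let g : ℝ → ℝ be C¹ with g(0) = 0 and g'(0) < 0. If φ : ℝ → (0,1) is a C² solution of A₀φ'' + cφ' + g(φ) = 0 on ℝ with A₀ > 0, c ∈ ℝ, φ(ξ) → 0 as ξ → +∞ and φ'(ξ) → 0 as ξ → +∞, then φ and φ' decay exponentially as ξ → +∞: there exist μ < 0, C > 0 and ξ₀ with φ(ξ) ≤ C e^{μξ} for ξ ≥ ξ₀. -/
/-! Since `g x = g'(0) x + o(x)` and `g'(0) < 0`, we have `g x < (g'(0)/2) x` for small `x > 0`,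
so once `φ` is small it satisfies `A₀ φ'' + c φ' + (g'(0)/2) φ ≥ 0`. The characteristic roots of
this linear operator satisfy `μ₁ < 0 < μ₂`, and it factors as `A₀ (D - μ₁)(D - μ₂)`. Hence
`u = φ' - μ₁ φ` satisfies `u' ≥ μ₂ u`, i.e. `e^{-μ₂ ξ} u` is nondecreasing; as it tends to `0`,
`u ≤ 0`, which says that `e^{-μ₁ ξ} φ` is nonincreasing. -/

open Real Filter Set Topology

lemma exists_neg_pos_roots_of_neg {a d : ℝ} (b : ℝ) (ha : 0 < a) (hd : d < 0) :
    ∃ μ₁ < 0, ∃ μ₂ > 0, a * (μ₁ + μ₂) = -b ∧ a * (μ₁ * μ₂) = d := by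
  set s := √(b ^ 2 - 4 * a * d)
  have hs2 : s ^ 2 = b ^ 2 - 4 * a * d := sq_sqrt (by nlinarith [sq_nonneg b])
  have hbs : |b| < s := by
    rw [← sqrt_sq_eq_abs]
    exact sqrt_lt_sqrt (sq_nonneg b) (by nlinarith)
  refine ⟨(-b - s) / (2 * a), div_neg_of_neg_of_pos ?_ (by positivity),
    (-b + s) / (2 * a), div_pos ?_ (by positivity), ?_, ?_⟩
  · linarith [neg_abs_le b]
  · linarith [le_abs_self b]
  · field_simp
    ring
  · field_simp
    linear_combination (-1) * hs2

lemma HasDerivAt.eventually_lt_mul {g : ℝ → ℝ} {g' m : ℝ} (hg : HasDerivAt g g' 0)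
    (hg0 : g 0 = 0) (hm : g' < m) : ∀ᶠ x in 𝓝[>] 0, g x < m * x := by
  filter_upwards [hg.tendsto_slope_zero_right.eventually (gt_mem_nhds hm), self_mem_nhdsWithin]
    with x hx (hx0 : 0 < x)
  simp only [zero_add, hg0, sub_zero, smul_eq_mul] at hx
  rwa [inv_mul_lt_iff₀ hx0, mul_comm] at hx

lemma monotoneOn_exp_mul_of_mul_le_deriv {f f' : ℝ → ℝ} {μ a : ℝ}
    (hf : ∀ x, HasDerivAt f (f' x) x) (h : ∀ x ≥ a, μ * f x ≤ f' x) :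
    MonotoneOn (fun x => exp (-μ * x) * f x) (Ici a) := by
  have hd : ∀ x, HasDerivAt (fun x => exp (-μ * x) * f x)
      (exp (-μ * x) * (f' x - μ * f x)) x := by
    intro x
    have he : HasDerivAt (fun x => exp (-μ * x)) (exp (-μ * x) * -μ) x := by
      simpa using ((hasDerivAt_id x).const_mul (-μ)).exp
    exact (he.mul (hf x)).congr_deriv (by ring)
  refine monotoneOn_of_hasDerivWithinAt_nonneg (convex_Ici a)
    (fun x _ => (hd x).continuousAt.continuousWithinAt) (fun x _ => (hd x).hasDerivWithinAt)
    fun x hx => ?_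
  rw [interior_Ici] at hx
  exact mul_nonneg (exp_pos _).le (sub_nonneg.2 (h x (le_of_lt hx)))

lemma nonpos_of_mul_le_deriv_of_tendsto_zero {f f' : ℝ → ℝ} {μ a x : ℝ}
    (hf : ∀ x, HasDerivAt f (f' x) x) (hμ : 0 < μ) (h : ∀ x ≥ a, μ * f x ≤ f' x)
    (hlim : Tendsto f atTop (𝓝 0)) (hx : a ≤ x) : f x ≤ 0 := by
  have hmono := monotoneOn_exp_mul_of_mul_le_deriv hf h
  have hexp : Tendsto (fun y => exp (-μ * y)) atTop (𝓝 0) :=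
    tendsto_exp_atBot.comp (tendsto_id.const_mul_atTop_of_neg (neg_neg_of_pos hμ))
  have hle : exp (-μ * x) * f x ≤ 0 := by
    refine ge_of_tendsto (by simpa using hexp.mul hlim) ?_
    filter_upwards [eventually_ge_atTop x] with y hy
    simpa using hmono hx (hx.trans hy) hy
  exact nonpos_of_mul_nonpos_right hle (exp_pos _)

lemma le_exp_mul_of_factored_deriv2_nonneg {φ φ' φ'' : ℝ → ℝ} {μ₁ μ₂ a x : ℝ}
    (hφ : ∀ x, HasDerivAt φ (φ' x) x) (hφ' : ∀ x, HasDerivAt φ' (φ'' x) x) (hμ₂ : 0 < μ₂)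
    (h : ∀ x ≥ a, 0 ≤ φ'' x - (μ₁ + μ₂) * φ' x + μ₁ * μ₂ * φ x)
    (hlim : Tendsto φ atTop (𝓝 0)) (hlim' : Tendsto φ' atTop (𝓝 0)) (hx : a ≤ x) :
    φ x ≤ exp (μ₁ * (x - a)) * φ a := by
  have hu : ∀ y ≥ a, φ' y - μ₁ * φ y ≤ 0 := fun y hy =>
    nonpos_of_mul_le_deriv_of_tendsto_zero (f := fun z => φ' z - μ₁ * φ z)
      (fun z => (hφ' z).sub ((hφ z).const_mul μ₁)) hμ₂
      (fun z hz => by linarith [h z hz]) (by simpa using hlim'.sub (hlim.const_mul μ₁)) hy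
  have hmono := monotoneOn_exp_mul_of_mul_le_deriv (f := fun z => -φ z) (μ := μ₁)
    (fun z => (hφ z).neg) (fun z hz => by linarith [hu z hz])
  have hax : exp (-μ₁ * x) * φ x ≤ exp (-μ₁ * a) * φ a := by
    linarith [hmono self_mem_Ici hx hx]
  calc φ x = exp (μ₁ * x) * (exp (-μ₁ * x) * φ x) := by
        rw [← mul_assoc, ← exp_add]; simp
    _ ≤ exp (μ₁ * x) * (exp (-μ₁ * a) * φ a) := by gcongr
    _ = exp (μ₁ * (x - a)) * φ a := by
        rw [← mul_assoc, ← exp_add]; ring_nf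

theorem stmt_18 (A₀ c : ℝ) (hA₀ : 0 < A₀)
    (g : ℝ → ℝ) (hg : ContDiff ℝ 1 g) (hg0 : g 0 = 0) (hg' : deriv g 0 < 0)
    (φ : ℝ → ℝ) (hφ : ContDiff ℝ 2 φ) (hrange : ∀ ξ, φ ξ ∈ Ioo (0:ℝ) 1)
    (hODE : ∀ ξ : ℝ, A₀ * deriv (deriv φ) ξ + c * deriv φ ξ + g (φ ξ) = 0)
    (hlim : Tendsto φ atTop (nhds 0))
    (hlim' : Tendsto (deriv φ) atTop (nhds 0)) :
    ∃ μ < (0:ℝ), ∃ C > (0:ℝ), ∃ ξ₀ : ℝ, ∀ ξ ≥ ξ₀, φ ξ ≤ C * exp (μ * ξ) := by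
  obtain ⟨μ₁, hμ₁, μ₂, hμ₂, hsum, hprod⟩ :=
    exists_neg_pos_roots_of_neg c hA₀ (by linarith : deriv g 0 / 2 < 0)
  have hφ_pos : Tendsto φ atTop (𝓝[>] 0) :=
    tendsto_nhdsWithin_iff.2 ⟨hlim, .of_forall fun ξ => (hrange ξ).1⟩
  obtain ⟨ξ₀, hξ₀⟩ := eventually_atTop.1 <| hφ_pos.eventually <|
    (hg.differentiable one_ne_zero 0).hasDerivAt.eventually_lt_mul hg0
      (m := deriv g 0 / 2) (by linarith)
  have hsub : ∀ ξ ≥ ξ₀, 0 ≤ deriv (deriv φ) ξ - (μ₁ + μ₂) * deriv φ ξ + μ₁ * μ₂ * φ ξ := by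
    intro ξ hξ
    have hlin : A₀ * (deriv (deriv φ) ξ - (μ₁ + μ₂) * deriv φ ξ + μ₁ * μ₂ * φ ξ)
        = -g (φ ξ) + deriv g 0 / 2 * φ ξ := by
      linear_combination hODE ξ - deriv φ ξ * hsum + φ ξ * hprod
    exact nonneg_of_mul_nonneg_right (by linarith [hξ₀ ξ hξ]) hA₀
  refine ⟨μ₁, hμ₁, exp (-μ₁ * ξ₀) * φ ξ₀, mul_pos (exp_pos _) (hrange ξ₀).1, ξ₀, fun ξ hξ => ?_⟩
  calc φ ξ ≤ exp (μ₁ * (ξ - ξ₀)) * φ ξ₀ :=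
        le_exp_mul_of_factored_deriv2_nonneg
          (fun x => (hφ.differentiable two_ne_zero x).hasDerivAt)
          (fun x => (hφ.differentiable_deriv_two x).hasDerivAt) hμ₂ hsub hlim hlim' hξ
    _ = exp (-μ₁ * ξ₀) * φ ξ₀ * exp (μ₁ * ξ) := by
        rw [mul_comm _ (φ ξ₀), mul_right_comm, ← exp_add]; ring_nf
end
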